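/- arXiv:1508.02524 — 4 statements merged into one kernel-verified Lean document; each statement's English description precedes it below -/
import Mathlib

section
/- If λ ∈ ℝ^d is sorted decreasingly with pairwise distinct entries, then the neighbors (vertices connected by an edge) of the vertex λ in the polytope conv{P_σ λ : σ ∈ Σ_d} are exactly the d−1 vectors obtained from λ by transposing adjacent coordinates i and i+1 for i = 1,…,d−1. -/
/-- `u` and `v` are neighboring vertices of the polytope `P`: they are distinct and the
segment joining them is a face (an extreme subset, i.e. an edge) of `P`. -/
def IsNeighbor {d : ℕ} (P : Set (Fin d → ℝ)) (u v : Fin d → ℝ) : Prop :=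
  u ≠ v ∧ IsExtreme ℝ P (segment ℝ u v)

/-!
All points of the orbit `{lam ∘ σ}` have the same Euclidean norm, so each of them is an exposed,
hence extreme, point of its convex hull `P`. For an adjacent transposition `s`, the rearrangement
inequality shows that the functional `⟨lam + lam ∘ s, ·⟩` is maximised on the orbit exactly at
`lam` and `lam ∘ s`, so it exposes the segment between them.

Conversely, every `v ∈ P` is majorized by `lam`, so by summation by parts `v - lam` is a
nonnegative combination of the edge directions `lam ∘ s_i - lam`. If the segment `[lam, v]` is a
face of `P`, every vertex `lam ∘ s_i` carrying positive weight lies on it; being extreme, it is an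
endpoint, hence equal to `v`.
-/

open Finset

section ConvexGeometry

variable {E : Type*} [AddCommGroup E] [Module ℝ E]

theorem ContinuousLinearMap.toExposed_convexHull [TopologicalSpace E] (l : StrongDual ℝ E)
    (S : Set E) : l.toExposed (convexHull ℝ S) = convexHull ℝ (l.toExposed S) := by
  classical
  refine subset_antisymm ?_ (convexHull_min ?_ ((ContinuousLinearMap.toExposed.isExposed).convex
    (convex_convexHull ℝ S)))
  · rintro x ⟨hx, hmax⟩
    obtain ⟨ι, _, w, z, hw0, hw1, hzS, rfl⟩ := mem_convexHull_iff_exists_fintype.1 hx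
    have hgap : ∑ i, w i * (l (∑ j, w j • z j) - l (z i)) = 0 := by
      simp only [mul_sub, sum_sub_distrib, ← sum_mul, hw1, one_mul, map_sum,
        map_smul, smul_eq_mul, sub_self]
    have hmaxz : ∀ i, w i ≠ 0 → z i ∈ l.toExposed S := by
      intro i hi
      have := (sum_eq_zero_iff_of_nonneg fun i _ =>
        mul_nonneg (hw0 i) (sub_nonneg.2 (hmax _ (subset_convexHull ℝ S (hzS i))))).1 hgap i
        (mem_univ i)
      refine ⟨hzS i, fun y hy => ?_⟩
      rw [← sub_eq_zero.1 ((mul_eq_zero.1 this).resolve_left hi)]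
      exact hmax y (subset_convexHull ℝ S hy)
    rw [← sum_filter_of_ne (p := fun i => w i ≠ 0) fun i _ h h0 => h (by simp [h0])]
    refine (convex_convexHull ℝ _).sum_mem (fun i _ => hw0 i) ?_ fun i hi =>
      subset_convexHull ℝ _ (hmaxz i (mem_filter.1 hi).2)
    rw [sum_filter_ne_zero, hw1]
  · rintro y ⟨hyS, hy⟩
    exact ⟨subset_convexHull ℝ S hyS, fun x hx =>
      convexHull_min hy (convex_halfSpace_le l.isLinear (l y)) hx⟩

theorem eq_or_eq_of_mem_segment_of_mem_extremePoints {A : Set E} {a b y : E} (ha : a ∈ A)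
    (hb : b ∈ A) (hy : y ∈ A.extremePoints ℝ) (hseg : y ∈ segment ℝ a b) : y = a ∨ y = b := by
  rw [← insert_endpoints_openSegment] at hseg
  rcases hseg with rfl | rfl | hopen
  · exact Or.inl rfl
  · exact Or.inr rfl
  · exact Or.inl (hy.2 ha hb hopen).symm

theorem mem_segment_of_isExtreme_of_sub_eq_smul_add_smul {A : Set E} (hA : Convex ℝ A)
    {a b y z : E} (hF : IsExtreme ℝ A (segment ℝ a b)) (hy : y ∈ A) (hz : z ∈ A) {α β : ℝ}
    (hα : 0 < α) (hβ : 0 ≤ β) (h : b - a = α • (y - a) + β • (z - a)) :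
    y ∈ segment ℝ a b := by
  have ha : a ∈ A := hF.1 (left_mem_segment ℝ a b)
  set u := (1 + α + β)⁻¹
  have hu0 : 0 < u := by positivity
  have hu1 : u * (1 + α + β) = 1 := inv_mul_cancel₀ (by positivity)
  have hβ1 : (1 + β) * (1 + β)⁻¹ = 1 := mul_inv_cancel₀ (by positivity)
  set x := (1 + β)⁻¹ • a + (β * (1 + β)⁻¹) • z
  have hx : x ∈ A := hA ha hz (by positivity) (by positivity) (by linear_combination hβ1)
  -- `a + u • (b - a)` lies on the edge and strictly between `y` and `x ∈ A`.
  have hq : a + u • (b - a) ∈ segment ℝ a b :=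
    ⟨1 - u, u, by nlinarith, hu0.le, by ring, by module⟩
  refine hF.2 hy hx hq ⟨u * α, u * (1 + β), by positivity, by positivity, by linarith, ?_⟩
  rw [h]
  simp only [x, smul_add, smul_smul]
  linear_combination (norm := module) (u * hβ1 + hu1) • a + (u * β * hβ1) • z

theorem mem_segment_of_isExtreme_of_sub_eq_sum {A : Set E} (hA : Convex ℝ A) {a b : E}
    (hF : IsExtreme ℝ A (segment ℝ a b)) {ι : Type*} {s : Finset ι} {y : ι → E}
    (hy : ∀ i ∈ s, y i ∈ A) {γ : ι → ℝ} (hγ : ∀ i ∈ s, 0 ≤ γ i)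
    (h : b - a = ∑ i ∈ s, γ i • (y i - a)) {j : ι} (hj : j ∈ s) (hγj : 0 < γ j) :
    y j ∈ segment ℝ a b := by
  classical
  rw [← add_sum_erase s _ hj] at h
  have hγ' : ∀ i ∈ s.erase j, 0 ≤ γ i := fun i hi => hγ i (mem_of_mem_erase hi)
  rcases (sum_nonneg hγ').eq_or_lt with h0 | hpos
  · have hrest : ∑ i ∈ s.erase j, γ i • (y i - a) = 0 := sum_eq_zero fun i hi => by
      rw [(sum_eq_zero_iff_of_nonneg hγ').1 h0.symm i hi, zero_smul]
    refine mem_segment_of_isExtreme_of_sub_eq_smul_add_smul hA hF (hy j hj)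
      (hF.1 (left_mem_segment ℝ a b)) hγj le_rfl (β := 0) ?_
    rw [h, hrest]
    simp
  · refine mem_segment_of_isExtreme_of_sub_eq_smul_add_smul hA hF (hy j hj)
      (hA.centerMass_mem hγ' hpos fun i hi => hy i (mem_of_mem_erase hi)) hγj hpos.le ?_
    rw [h, centerMass]
    congr 1
    rw [smul_sub, smul_inv_smul₀ hpos.ne']
    simp [smul_sub, sum_sub_distrib, sum_smul]

end ConvexGeometry

section DotProduct

variable {ι : Type*} [Fintype ι] [DecidableEq ι]

noncomputable def dotProductCLM (c : ι → ℝ) : StrongDual ℝ (ι → ℝ) :=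
  LinearMap.toContinuousLinearMap (dotProductEquiv ℝ ι c)

@[simp] theorem dotProductCLM_apply (c x : ι → ℝ) : dotProductCLM c x = c ⬝ᵥ x := rfl

theorem mem_extremePoints_convexHull_of_dotProduct_self_eq {S : Set (ι → ℝ)} {r : ℝ}
    (hS : ∀ z ∈ S, z ⬝ᵥ z = r) {y : ι → ℝ} (hy : y ∈ S) :
    y ∈ (convexHull ℝ S).extremePoints ℝ := by
  have hsq : ∀ w ∈ S, (w - y) ⬝ᵥ (w - y) = 2 * (r - y ⬝ᵥ w) := fun w hw => by
    simp only [sub_dotProduct, dotProduct_sub, hS w hw, hS y hy, dotProduct_comm w y]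
    ring
  have hsq_nonneg : ∀ v : ι → ℝ, 0 ≤ v ⬝ᵥ v := fun v =>
    sum_nonneg fun i _ => mul_self_nonneg (v i)
  have hface : (dotProductCLM y).toExposed (convexHull ℝ S) = {y} := by
    rw [ContinuousLinearMap.toExposed_convexHull, ← convexHull_singleton (𝕜 := ℝ)]
    congr 1
    ext z
    rw [Set.mem_singleton_iff]
    refine ⟨fun ⟨hz, hmax⟩ => ?_, ?_⟩
    · simp only [dotProductCLM_apply] at hmax
      have h0 : (z - y) ⬝ᵥ (z - y) = 0 := by
        linarith [hsq z hz, hsq_nonneg (z - y), hmax y hy, hS y hy]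
      exact sub_eq_zero.1 (dotProduct_self_eq_zero.1 h0)
    · rintro rfl
      refine ⟨hy, fun w hw => ?_⟩
      simp only [dotProductCLM_apply]
      linarith [hsq w hw, hsq_nonneg (w - z), hS z hy]
  rw [← isExtreme_singleton, ← hface]
  exact ContinuousLinearMap.toExposed.isExposed.isExtreme

end DotProduct

section Permutohedron

variable {ι : Type*}

theorem isLinearMap_sum_apply (s : Finset ι) : IsLinearMap ℝ fun x : ι → ℝ => ∑ j ∈ s, x j :=
  ⟨fun _ _ => sum_add_distrib, fun _ _ => (mul_sum _ _ _).symm⟩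

def permOrbit (lam : ι → ℝ) : Set (ι → ℝ) := {μ | ∃ σ : Equiv.Perm ι, μ = lam ∘ σ}

theorem comp_perm_mem_permOrbit (lam : ι → ℝ) (σ : Equiv.Perm ι) : lam ∘ σ ∈ permOrbit lam :=
  ⟨σ, rfl⟩

theorem self_mem_permOrbit (lam : ι → ℝ) : lam ∈ permOrbit lam := ⟨1, rfl⟩

theorem permOrbit_subset_extremePoints [Fintype ι] [DecidableEq ι] (lam : ι → ℝ) :
    permOrbit lam ⊆ (convexHull ℝ (permOrbit lam)).extremePoints ℝ := fun _ hy =>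
  mem_extremePoints_convexHull_of_dotProduct_self_eq
    (by rintro _ ⟨σ, rfl⟩; exact Equiv.sum_comp σ fun i => lam i * lam i) hy

theorem sum_eq_of_mem_convexHull_permOrbit [Fintype ι] {lam x : ι → ℝ}
    (hx : x ∈ convexHull ℝ (permOrbit lam)) : ∑ j, x j = ∑ j, lam j := by
  have hsub : permOrbit lam ⊆ {y : ι → ℝ | ∑ j, y j = ∑ j, lam j} := by
    rintro _ ⟨σ, rfl⟩
    exact Equiv.sum_comp σ lam
  exact convexHull_min hsub (convex_hyperplane (isLinearMap_sum_apply univ) _) hx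

theorem comp_swap_sub_self {R : Type*} [Ring R] [DecidableEq ι] (lam : ι → R) {a b : ι}
    (hab : a ≠ b) :
    lam ∘ Equiv.swap a b - lam = (lam a - lam b) • (Pi.single b 1 - Pi.single a 1) := by
  ext k
  rcases eq_or_ne k a with rfl | hka
  · simp [hab]
  rcases eq_or_ne k b with rfl | hkb
  · simp [hab.symm]
  · simp [Equiv.swap_apply_of_ne_of_ne hka hkb, hka, hkb]

variable [Fintype ι] [LinearOrder ι] [LocallyFiniteOrderBot ι]

theorem sum_Iic_comp_perm_le {lam : ι → ℝ} (hlam : Antitone lam) (σ : Equiv.Perm ι) (k : ι) :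
    ∑ j ∈ Iic k, lam (σ j) ≤ ∑ j ∈ Iic k, lam j := by
  have hind : Antitone fun j => if j ≤ k then (1 : ℝ) else 0 := fun a b hab => by
    dsimp only
    split_ifs <;> first | exact le_rfl | exact zero_le_one | exact absurd (hab.trans ‹_›) ‹_›
  have hmv : Monovary (fun j => if j ≤ k then (1 : ℝ) else 0) lam := fun i j hij =>
    hind (hlam.reflect_lt hij).le
  simpa [ite_mul, sum_ite, filter_ge_eq_Iic] using hmv.sum_mul_comp_perm_le_sum_mul (σ := σ)

theorem sum_Iic_le_of_mem_convexHull_permOrbit {lam x : ι → ℝ} (hlam : Antitone lam)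
    (hx : x ∈ convexHull ℝ (permOrbit lam)) (k : ι) :
    ∑ j ∈ Iic k, x j ≤ ∑ j ∈ Iic k, lam j := by
  have hsub : permOrbit lam ⊆ {y : ι → ℝ | ∑ j ∈ Iic k, y j ≤ ∑ j ∈ Iic k, lam j} := by
    rintro _ ⟨σ, rfl⟩
    exact sum_Iic_comp_perm_le hlam σ k
  exact convexHull_min hsub (convex_halfSpace_le (isLinearMap_sum_apply (Iic k)) _) hx

end Permutohedron

section AdjacentTranspositions

variable {n : ℕ}

theorem eq_sum_sum_Iic_smul_single_sub {R : Type*} [Ring R] (x : Fin (n + 1) → R)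
    (hx : ∑ j, x j = 0) :
    x = ∑ i : Fin n,
      (∑ j ∈ Iic i.castSucc, x j) • (Pi.single i.castSucc 1 - Pi.single i.succ 1) := by
  set S : Fin (n + 1) → R := fun k => ∑ j ∈ Iic k, x j
  have hlast : S (Fin.last n) = 0 := by
    rw [← hx, ← Iic_top, Fin.top_eq_last]
  have hzero : S 0 - x 0 = 0 := by
    rw [sub_eq_zero, ← sum_singleton x 0, ← bot_eq_zero, ← Iic_bot]
  have hstep : ∀ i : Fin n, S i.succ - x i.succ = S i.castSucc := fun i => by
    have : Iio i.succ = Iic i.castSucc := by ext j; simp [Fin.le_castSucc_iff]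
    simp [S, ← Iio_insert, this]
  calc x = ∑ k, x k • Pi.single k (1 : R) := by
          simp [← Pi.single_smul', univ_sum_single]
    _ = ∑ k, S k • Pi.single k (1 : R) - ∑ k, (S k - x k) • Pi.single k (1 : R) := by
          rw [← sum_sub_distrib]
          simp only [← sub_smul, sub_sub_cancel]
    _ = ∑ i : Fin n, S i.castSucc • (Pi.single i.castSucc 1 - Pi.single i.succ 1) := by
          rw [Fin.sum_univ_castSucc, Fin.sum_univ_succ, hlast, hzero]
          simp only [hstep, zero_smul, add_zero, zero_add, smul_sub, sum_sub_distrib]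

theorem exists_sub_eq_sum_smul_comp_swap_sub {lam v : Fin (n + 1) → ℝ} (hlam : StrictAnti lam)
    (hv : v ∈ convexHull ℝ (permOrbit lam)) :
    ∃ γ : Fin n → ℝ, (∀ i, 0 ≤ γ i) ∧
      v - lam = ∑ i, γ i • (lam ∘ Equiv.swap i.castSucc i.succ - lam) := by
  refine ⟨fun i => (∑ j ∈ Iic i.castSucc, lam j - ∑ j ∈ Iic i.castSucc, v j) /
    (lam i.castSucc - lam i.succ), fun i => div_nonneg
      (sub_nonneg.2 (sum_Iic_le_of_mem_convexHull_permOrbit hlam.antitone hv _))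
      (sub_nonneg.2 (hlam i.castSucc_lt_succ).le), ?_⟩
  rw [← neg_sub, eq_sum_sum_Iic_smul_single_sub (lam - v)
    (by simp [sum_sub_distrib, sum_eq_of_mem_convexHull_permOrbit hv]), ← sum_neg_distrib]
  refine sum_congr rfl fun i _ => ?_
  rw [comp_swap_sub_self lam i.castSucc_lt_succ.ne, smul_smul,
    div_mul_cancel₀ _ (sub_ne_zero.2 (hlam.injective.ne i.castSucc_lt_succ.ne))]
  simp only [Pi.sub_apply, sum_sub_distrib]
  module

theorem exists_eq_comp_swap_of_isExtreme_segment {lam v : Fin (n + 1) → ℝ}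
    (hlam : StrictAnti lam) (hne : lam ≠ v)
    (hF : IsExtreme ℝ (convexHull ℝ (permOrbit lam)) (segment ℝ lam v)) :
    ∃ i : Fin n, v = lam ∘ Equiv.swap i.castSucc i.succ := by
  obtain ⟨γ, hγ, hsum⟩ :=
    exists_sub_eq_sum_smul_comp_swap_sub hlam (hF.1 (right_mem_segment ℝ lam v))
  obtain ⟨i, -, hi⟩ := exists_ne_zero_of_sum_ne_zero (hsum ▸ sub_ne_zero.2 hne.symm)
  have hseg := mem_segment_of_isExtreme_of_sub_eq_sum (convex_convexHull ℝ _) hF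
    (fun i _ => subset_convexHull ℝ _ (comp_perm_mem_permOrbit lam _)) (fun i _ => hγ i) hsum
    (mem_univ i) ((hγ i).lt_of_ne (Ne.symm (left_ne_zero_of_smul hi)))
  refine ⟨i, ((eq_or_eq_of_mem_segment_of_mem_extremePoints (hF.1 (left_mem_segment ℝ lam v))
    (hF.1 (right_mem_segment ℝ lam v)) (permOrbit_subset_extremePoints lam
    (comp_perm_mem_permOrbit lam _)) hseg).resolve_left fun h => ?_).symm⟩
  have := congr_fun h i.castSucc
  simp only [Function.comp_apply, Equiv.swap_apply_left] at this
  exact (hlam i.castSucc_lt_succ).ne this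

theorem swap_castSucc_succ_lt_swap {i : Fin n} {j k : Fin (n + 1)} (hjk : j < k)
    (hne : ¬(j = i.castSucc ∧ k = i.succ)) :
    Equiv.swap i.castSucc i.succ j < Equiv.swap i.castSucc i.succ k := by
  rw [Fin.lt_def] at hjk ⊢
  simp only [Fin.ext_iff, Fin.val_succ, Fin.val_castSucc] at hne
  simp only [Equiv.swap_apply_def]
  split_ifs <;> simp only [Fin.ext_iff, Fin.val_succ, Fin.val_castSucc] at * <;> omega

theorem eq_one_or_eq_swap_of_forall_lt {i : Fin n} {τ : Equiv.Perm (Fin (n + 1))}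
    (hτ : ∀ j k, j < k → ¬(j = i.castSucc ∧ k = i.succ) → τ j < τ k) :
    τ = 1 ∨ τ = Equiv.swap i.castSucc i.succ := by
  set s := Equiv.swap i.castSucc i.succ
  have heq_one : ∀ ρ : Equiv.Perm (Fin (n + 1)),
      (∀ j k, j < k → ¬(j = i.castSucc ∧ k = i.succ) → ρ j < ρ k) →
      ρ i.castSucc < ρ i.succ → ρ = 1 := fun ρ hρ hi => by
    have hmono : StrictMono ρ := fun j k hjk => by
      by_cases hp : j = i.castSucc ∧ k = i.succ
      · obtain ⟨rfl, rfl⟩ := hp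
        exact hi
      · exact hρ j k hjk hp
    ext j
    exact congrArg Fin.val (le_antisymm hmono.apply_le hmono.le_apply)
  rcases lt_or_gt_of_ne (τ.injective.ne i.castSucc_lt_succ.ne) with h | h
  · exact Or.inl (heq_one τ hτ h)
  · refine Or.inr ((mul_eq_one_iff_eq_inv.1 (heq_one (τ * s) (fun j k hjk hp => hτ _ _
      (swap_castSucc_succ_lt_swap hjk hp) ?_) (by simpa [s] using h))).trans (Equiv.swap_inv _ _))
    rintro ⟨hj, hk⟩
    rw [Equiv.swap_apply_eq_iff, Equiv.swap_apply_left] at hj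
    rw [Equiv.swap_apply_eq_iff, Equiv.swap_apply_right] at hk
    exact (hjk.trans_eq hk).not_gt (hj ▸ i.castSucc_lt_succ)

theorem toExposed_permOrbit_eq_pair {lam : Fin (n + 1) → ℝ} (hlam : StrictAnti lam) (i : Fin n) :
    (dotProductCLM (lam + lam ∘ Equiv.swap i.castSucc i.succ)).toExposed (permOrbit lam) =
      {lam, lam ∘ Equiv.swap i.castSucc i.succ} := by
  set s := Equiv.swap i.castSucc i.succ
  set c := lam + lam ∘ s
  have hlt : ∀ j k, j < k → ¬(j = i.castSucc ∧ k = i.succ) → c k < c j := fun j k hjk hp =>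
    add_lt_add (hlam hjk) (hlam (swap_castSucc_succ_lt_swap hjk hp))
  have hcs : c ∘ s = c := by
    ext j
    simp [c, s, add_comm]
  have hmv : Monovary c lam := fun j k hjk => by
    have hkj : k < j := hlam.lt_iff_gt.1 hjk
    by_cases hp : k = i.castSucc ∧ j = i.succ
    · obtain ⟨rfl, rfl⟩ := hp
      simpa [s] using (congr_fun hcs i.castSucc).le
    · exact (hlt k j hkj hp).le
  have hle : ∀ τ : Equiv.Perm (Fin (n + 1)), c ⬝ᵥ (lam ∘ τ) ≤ c ⬝ᵥ lam := fun τ =>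
    hmv.sum_mul_comp_perm_le_sum_mul
  have hswap : c ⬝ᵥ (lam ∘ s) = c ⬝ᵥ lam := by
    conv_lhs => rw [← hcs]
    exact Equiv.sum_comp s fun j => c j * lam j
  ext z
  constructor
  · rintro ⟨⟨τ, rfl⟩, hmax⟩
    have hmvτ : Monovary c (lam ∘ τ) := hmv.sum_mul_comp_perm_eq_sum_mul_iff.1
      (le_antisymm (hle τ) (hmax lam (self_mem_permOrbit lam)))
    have hτ : ∀ j k, j < k → ¬(j = i.castSucc ∧ k = i.succ) → τ j < τ k := fun j k hjk hp => by
      by_contra hτ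
      exact (hlt j k hjk hp).not_ge
        (hmvτ (hlam ((not_lt.1 hτ).lt_of_ne (τ.injective.ne hjk.ne'))))
    rcases eq_one_or_eq_swap_of_forall_lt hτ with rfl | rfl
    · exact Or.inl rfl
    · exact Or.inr rfl
  · rintro (rfl | rfl)
    · exact ⟨self_mem_permOrbit z, fun _ ⟨τ, hw⟩ => hw ▸ hle τ⟩
    · exact ⟨comp_perm_mem_permOrbit lam s, fun _ ⟨τ, hw⟩ => hw ▸ (hle τ).trans hswap.ge⟩

theorem isNeighbor_comp_swap {lam : Fin (n + 1) → ℝ} (hlam : StrictAnti lam) (i : Fin n) :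
    IsNeighbor (convexHull ℝ (permOrbit lam)) lam (lam ∘ Equiv.swap i.castSucc i.succ) := by
  refine ⟨fun h => ?_, ?_⟩
  · have := congr_fun h i.castSucc
    simp only [Function.comp_apply, Equiv.swap_apply_left] at this
    exact (hlam i.castSucc_lt_succ).ne' this
  · rw [← convexHull_pair, ← toExposed_permOrbit_eq_pair hlam i,
      ← ContinuousLinearMap.toExposed_convexHull]
    exact ContinuousLinearMap.toExposed.isExposed.isExtreme

theorem isNeighbor_convexHull_permOrbit_iff {lam v : Fin (n + 1) → ℝ} (hlam : StrictAnti lam) :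
    IsNeighbor (convexHull ℝ (permOrbit lam)) lam v ↔
      ∃ i : Fin n, v = lam ∘ Equiv.swap i.castSucc i.succ := by
  refine ⟨fun ⟨hne, hF⟩ => exists_eq_comp_swap_of_isExtreme_segment hlam hne hF, ?_⟩
  rintro ⟨i, rfl⟩
  exact isNeighbor_comp_swap hlam i

end AdjacentTranspositions

/-- If `λ ∈ ℝ^d` is sorted strictly decreasingly (pairwise distinct entries), then the
neighbors of the vertex `λ` in the polytope `conv{P_σ λ : σ ∈ Σ_d}` are exactly the
`d−1` vectors obtained from `λ` by transposing adjacent coordinates `i` and `i+1`. -/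
theorem stmt3 {d : ℕ} (lam : Fin d → ℝ) (hsort : StrictAnti lam) :
    {v : Fin d → ℝ |
      IsNeighbor (convexHull ℝ {μ : Fin d → ℝ | ∃ σ : Equiv.Perm (Fin d), μ = lam ∘ σ}) lam v}
    = {v : Fin d → ℝ | ∃ (i : ℕ) (hi : i + 1 < d),
        v = lam ∘ Equiv.swap ⟨i, Nat.lt_of_succ_lt hi⟩ ⟨i + 1, hi⟩} := by
  ext v
  cases d with
  | zero => simp [IsNeighbor, Subsingleton.elim lam v]
  | succ n =>
    exact (isNeighbor_convexHull_permOrbit_iff hsort).trans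
      ⟨fun ⟨i, hi⟩ => ⟨i, by omega, hi⟩, fun ⟨i, hi, h⟩ => ⟨⟨i, by omega⟩, h⟩⟩
end

section
/- The source volume V_s(λ), given by the formula V_s(λ) = (√d/(d!(d−1)!))·Σ_{σ∈Σ_d}(Σ_k σ(k)λ_k − (d+1)/2)^{d−1}/∏_k(σ(k)−σ(k+1)) on vectors with distinct entries, extends continuously to sorted probability vectors with repeated entries: for any sorted λ and any strictly decreasing sorted probability vector λ̃, the limit as ε→0+ of V_s((1−ε)λ + ελ̃) equals the same polynomial expression evaluated at λ. -/
/-!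
`VsPoly` is a finite sum of polynomials in `x`, hence continuous. Along the segment
`ε ↦ (1 - ε) λ + ε λ̃` with `0 < ε ≤ 1` the vector is strictly decreasing, because `λ` is
antitone and `λ̃` strictly antitone; there every sign factor `|a| / a` of `VsGen` equals `1`,
so `VsGen` agrees with `VsPoly` and the limit is the value of `VsPoly` at `λ`.
-/

/-- The polynomial source-volume formula
`V_s(x) = (√(d+1)/((d+1)!·d!))·Σ_σ (Σ_k σ(k)x_k − (d+2)/2)^d / ∏_k(σ(k)−σ(k+1))`
(1-based permutation values, vectors in `ℝ^(d+1)`). -/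
noncomputable def VsPoly (d : ℕ) (x : Fin (d + 1) → ℝ) : ℝ :=
  (Real.sqrt ((d : ℝ) + 1) / ((d + 1).factorial * d.factorial)) *
    ∑ σ : Equiv.Perm (Fin (d + 1)),
      ((∑ k : Fin (d + 1), (((σ k : ℕ) : ℝ) + 1) * x k) - ((d : ℝ) + 2) / 2) ^ d /
        ∏ k : Fin d, (((σ k.castSucc : ℕ) : ℝ) - ((σ k.succ : ℕ) : ℝ))

/-- The general form of the source-volume formula, including the sign factors
`∏_k |x_k − x_{k+1}|/(x_k − x_{k+1})`, valid on vectors with distinct entries. -/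
noncomputable def VsGen (d : ℕ) (x : Fin (d + 1) → ℝ) : ℝ :=
  (∏ k : Fin d, |x k.castSucc - x k.succ| / (x k.castSucc - x k.succ)) * VsPoly d x

theorem continuous_VsPoly (d : ℕ) : Continuous (VsPoly d) := by
  unfold VsPoly
  fun_prop

theorem VsGen_eq_VsPoly_of_strictAnti {d : ℕ} {x : Fin (d + 1) → ℝ} (hx : StrictAnti x) :
    VsGen d x = VsPoly d x := by
  have hsign : ∀ k : Fin d, |x k.castSucc - x k.succ| / (x k.castSucc - x k.succ) = 1 := by
    intro k
    have hpos : 0 < x k.castSucc - x k.succ := sub_pos.2 (hx k.castSucc_lt_succ)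
    rw [abs_of_pos hpos, div_self hpos.ne']
  simp only [VsGen, hsign, Finset.prod_const_one, one_mul]

theorem Antitone.one_sub_mul_add_mul_strictAnti {ι 𝕜 : Type*} [Preorder ι] [Field 𝕜]
    [LinearOrder 𝕜] [IsStrictOrderedRing 𝕜] {f g : ι → 𝕜} (hf : Antitone f) (hg : StrictAnti g)
    {ε : 𝕜} (hε₀ : 0 < ε) (hε₁ : ε ≤ 1) :
    StrictAnti fun i => (1 - ε) * f i + ε * g i :=
  (hf.const_mul (sub_nonneg.2 hε₁)).add_strictAnti (hg.const_mul hε₀)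

theorem stmt10_general (d : ℕ) (lam : Fin (d + 1) → ℝ)
    (hsort : ∀ i j, i ≤ j → lam j ≤ lam i)
    (tlam : Fin (d + 1) → ℝ) (htstrict : StrictAnti tlam) :
    Filter.Tendsto (fun ε : ℝ => VsGen d (fun i => (1 - ε) * lam i + ε * tlam i))
      (nhdsWithin 0 (Set.Ioi 0)) (nhds (VsPoly d lam)) := by
  have hsegment : Filter.Tendsto (fun ε : ℝ => fun i => (1 - ε) * lam i + ε * tlam i)
      (nhds 0) (nhds lam) := by
    have hcont : Continuous fun ε : ℝ => fun i => (1 - ε) * lam i + ε * tlam i := by fun_prop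
    simpa using hcont.tendsto 0
  have hpoly := ((continuous_VsPoly d).tendsto lam).comp hsegment
  refine (hpoly.mono_left nhdsWithin_le_nhds).congr' ?_
  filter_upwards [Ioc_mem_nhdsGT (zero_lt_one' ℝ)] with ε hε
  exact (VsGen_eq_VsPoly_of_strictAnti
    ((show Antitone lam from hsort).one_sub_mul_add_mul_strictAnti htstrict hε.1 hε.2)).symm

/-- The source volume formula (with sign factors), defined on vectors with distinct
entries, extends continuously to sorted probability vectors with repeated entries: for
any sorted probability vector `λ` and any strictly decreasing sorted probability vector
`λ̃`, the limit as `ε → 0⁺` of `V_s((1−ε)λ + ελ̃)` equals the polynomial expression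
evaluated at `λ`. -/
theorem stmt10 (d : ℕ) (lam : Fin (d + 1) → ℝ)
    (hsort : ∀ i j, i ≤ j → lam j ≤ lam i) (hnn : ∀ i, 0 ≤ lam i)
    (hsum : ∑ i, lam i = 1)
    (tlam : Fin (d + 1) → ℝ) (htstrict : StrictAnti tlam) (htnn : ∀ i, 0 ≤ tlam i)
    (htsum : ∑ i, tlam i = 1) :
    Filter.Tendsto (fun ε : ℝ => VsGen d (fun i => (1 - ε) * lam i + ε * tlam i))
      (nhdsWithin 0 (Set.Ioi 0)) (nhds (VsPoly d lam)) :=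
  stmt10_general d lam hsort tlam htstrict
end

section
/- For a sorted probability vector λ = (λ_1,…,λ_d) with strictly decreasing entries, each vector v_i = (λ_1,…,λ_i, λ_i, …, λ_i, λ_norm, 0,…,0) — coinciding with λ in the first i entries, then repeating λ_i, followed by a remainder λ_norm ∈ [0, λ_i] making the total sum 1 and zeros — majorizes λ and is a vertex of the accessible polytope {μ ∈ ℝ^{d} : μ sorted, λ ≺ μ}, as it satisfies d−1 independent defining inequalities with equality. -/
/-! Up to index `B` the plateau vector dominates `λ` entrywise, and from `B` on its partial sums
already equal its total `1 = ∑ λ`; this gives majorization. For extremality, each constraint that is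
tight at the plateau vector (the partial sums of length `≤ A + 1`, `μ_j = μ_A` for `A < j < B` and
`μ_j = 0` for `j > B`) is a linear inequality, hence stays tight at both ends of any open segment
through the vector; together with `∑ μ = 1`, these tight constraints determine the vector. -/

open Finset

theorem LinearMap.eq_of_mem_openSegment_of_le {𝕜 E : Type*} [CommRing 𝕜] [LinearOrder 𝕜]
    [IsStrictOrderedRing 𝕜] [AddCommGroup E] [Module 𝕜 E] (f : E →ₗ[𝕜] 𝕜) {c : 𝕜}
    {x y z : E} (hx : c ≤ f x) (hy : c ≤ f y) (hz : z ∈ openSegment 𝕜 x y) (hfz : f z = c) :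
    f x = c := by
  obtain ⟨s, t, hs, ht, hst, rfl⟩ := hz
  rw [map_add, map_smul, map_smul, smul_eq_mul, smul_eq_mul] at hfz
  have hsum : s * (f x - c) + t * (f y - c) = 0 := by linear_combination hfz - c * hst
  have hx' : s * (f x - c) ≤ 0 := by linarith [mul_nonneg ht.le (sub_nonneg.2 hy)]
  exact le_antisymm (sub_nonpos.1 (nonpos_of_mul_nonpos_right hx' hs)) hx

theorem eq_of_sum_eq_of_forall_ne {ι M : Type*} [Fintype ι] [DecidableEq ι]
    [AddCancelCommMonoid M] {μ ν : ι → M} (j : ι) (hsum : ∑ i, μ i = ∑ i, ν i)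
    (h : ∀ i, i ≠ j → μ i = ν i) : μ = ν := by
  funext i
  rcases eq_or_ne i j with rfl | hi
  · rw [← add_sum_erase _ _ (mem_univ i), ← add_sum_erase _ _ (mem_univ i),
      sum_congr rfl fun k hk => h k (ne_of_mem_erase hk)] at hsum
    exact add_right_cancel hsum
  · exact h i hi

section PrefixSum

variable {R : Type*} [Ring R] {d : ℕ}

def prefixSum (k : ℕ) : (Fin d → R) →ₗ[R] R where
  toFun μ := ∑ i : Fin d, if (i : ℕ) < k then μ i else 0
  map_add' μ ν := by
    rw [← sum_add_distrib]
    exact sum_congr rfl fun i _ => by split_ifs <;> simp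
  map_smul' c μ := by
    rw [RingHom.id_apply, smul_eq_mul, mul_sum]
    exact sum_congr rfl fun i _ => by split_ifs <;> simp

theorem prefixSum_apply (k : ℕ) (μ : Fin d → R) :
    prefixSum k μ = ∑ i : Fin d, if (i : ℕ) < k then μ i else 0 := rfl

theorem prefixSum_succ {k : ℕ} (hk : k < d) (μ : Fin d → R) :
    prefixSum (k + 1) μ = prefixSum k μ + μ ⟨k, hk⟩ := by
  rw [prefixSum_apply, prefixSum_apply, ← Fintype.sum_ite_eq' ⟨k, hk⟩ μ, ← sum_add_distrib]
  refine sum_congr rfl fun i _ => ?_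
  simp only [Fin.ext_iff]
  split_ifs <;> first | omega | simp

theorem prefixSum_congr {k : ℕ} {μ ν : Fin d → R}
    (h : ∀ i : Fin d, (i : ℕ) < k → μ i = ν i) : prefixSum k μ = prefixSum k ν := by
  rw [prefixSum_apply, prefixSum_apply]
  exact sum_congr rfl fun i _ => by split_ifs with hi <;> simp [h i, hi]

theorem prefixSum_eq_sum {k : ℕ} {μ : Fin d → R} (h : ∀ i : Fin d, k ≤ (i : ℕ) → μ i = 0) :
    prefixSum k μ = ∑ i, μ i := by
  rw [prefixSum_apply]
  refine sum_congr rfl fun i _ => ?_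
  split_ifs with hi
  · rfl
  · exact (h i (not_lt.1 hi)).symm

theorem apply_eq_of_prefixSum_eq {μ ν : Fin d → R} (i : Fin d)
    (h : prefixSum i μ = prefixSum i ν) (hsucc : prefixSum (i + 1) μ = prefixSum (i + 1) ν) :
    μ i = ν i := by
  rwa [prefixSum_succ i.isLt, prefixSum_succ i.isLt, h, add_right_inj] at hsucc

variable [PartialOrder R] [IsOrderedRing R]

theorem prefixSum_mono {k : ℕ} {μ ν : Fin d → R}
    (h : ∀ i : Fin d, (i : ℕ) < k → μ i ≤ ν i) : prefixSum k μ ≤ prefixSum k ν := by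
  rw [prefixSum_apply, prefixSum_apply]
  exact sum_le_sum fun i _ => by split_ifs with hi <;> simp [h i, hi]

theorem prefixSum_le_sum {μ : Fin d → R} (hμ : ∀ i, 0 ≤ μ i) (k : ℕ) :
    prefixSum k μ ≤ ∑ i, μ i := by
  rw [prefixSum_apply]
  exact sum_le_sum fun i _ => by split_ifs <;> simp [hμ i]

end PrefixSum

section Plateau

/-- The paper's `v_{A+1}` (indices start at `0`), with remainder `r = λ_norm` at index `B`. -/
def plateau {α : Type*} [Zero α] {d : ℕ} (lam : Fin d → α) (A B : Fin d) (r : α) : Fin d → α :=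
  fun j => if j ≤ A then lam j else if j < B then lam A else if j = B then r else 0

variable {α : Type*} [Zero α] {d : ℕ} {lam : Fin d → α} {A B j : Fin d} {r : α}

theorem plateau_of_le (h : j ≤ A) : plateau lam A B r j = lam j := if_pos h

theorem plateau_of_lt_of_lt (hA : A < j) (hB : j < B) : plateau lam A B r j = lam A := by
  simp [plateau, hA.not_ge, hB]

theorem plateau_of_gt (hAB : A < B) (h : B < j) : plateau lam A B r j = 0 := by
  simp [plateau, (hAB.trans h).not_ge, h.not_gt, h.ne']

variable [Preorder α]

theorem antitone_plateau (hlam : Antitone lam) (hr0 : 0 ≤ r) (hrA : r ≤ lam A) :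
    Antitone (plateau lam A B r) := by
  intro i j hij
  have hlamij := hlam hij
  have hA : ∀ {k}, k ≤ A → lam A ≤ lam k := fun h => hlam h
  simp only [plateau]
  split_ifs <;> first | order | (have := hA ‹i ≤ A›; order)

theorem plateau_nonneg (hnn : ∀ i, 0 ≤ lam i) (hr0 : 0 ≤ r) (j : Fin d) :
    0 ≤ plateau lam A B r j := by
  simp only [plateau]
  split_ifs <;> first | exact hnn _ | exact hr0 | exact le_rfl

theorem le_plateau (hlam : Antitone lam) (h : j < B) : lam j ≤ plateau lam A B r j := by
  rcases le_or_gt j A with hjA | hAj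
  · rw [plateau_of_le hjA]
  · rw [plateau_of_lt_of_lt hAj h]
    exact hlam hAj.le

end Plateau

section PlateauPrefixSum

variable {R : Type*} [Ring R] {d : ℕ} {lam : Fin d → R} {A B : Fin d} {r : R}

theorem prefixSum_plateau_of_le {k : ℕ} (hk : k ≤ A + 1) :
    prefixSum k (plateau lam A B r) = prefixSum k lam :=
  prefixSum_congr fun i hi => plateau_of_le (Fin.le_def.2 (by omega))

theorem eq_plateau (hAB : A < B) {μ : Fin d → R}
    (hhead : ∀ k ≤ (A : ℕ) + 1, prefixSum k μ = prefixSum k lam)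
    (hmid : ∀ j, A < j → j < B → μ j = μ A) (htail : ∀ j, B < j → μ j = 0)
    (hsum : ∑ i, μ i = ∑ i, plateau lam A B r i) : μ = plateau lam A B r := by
  have hle : ∀ j : Fin d, j ≤ A → μ j = lam j := by
    intro j hj
    rw [Fin.le_def] at hj
    exact apply_eq_of_prefixSum_eq j (hhead j (by omega)) (hhead (j + 1) (by omega))
  refine eq_of_sum_eq_of_forall_ne B hsum fun j hjB => ?_
  rcases le_or_gt j A with hjA | hAj
  · rw [hle j hjA, plateau_of_le hjA]
  rcases hjB.lt_or_gt with hjB | hBj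
  · rw [hmid j hAj hjB, hle A le_rfl, plateau_of_lt_of_lt hAj hjB]
  · rw [htail j hBj, plateau_of_gt hAB hBj]

variable [PartialOrder R] [IsOrderedRing R]

theorem prefixSum_le_prefixSum_plateau (hlam : Antitone lam) (hnn : ∀ i, 0 ≤ lam i)
    (hAB : A < B) (hsum : ∑ i, plateau lam A B r i = ∑ i, lam i) (k : ℕ) :
    prefixSum k lam ≤ prefixSum k (plateau lam A B r) := by
  rcases le_or_gt k B with hk | hk
  · exact prefixSum_mono fun i hi => le_plateau hlam (Fin.lt_def.2 (by omega))
  · rw [prefixSum_eq_sum fun i hi => plateau_of_gt hAB (Fin.lt_def.2 (by omega)), hsum]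
    exact prefixSum_le_sum hnn k

end PlateauPrefixSum

section AccessiblePolytope

variable {𝕜 : Type*} [CommRing 𝕜] [LinearOrder 𝕜] [IsStrictOrderedRing 𝕜] {d : ℕ}

def accessiblePolytope (lam : Fin d → 𝕜) : Set (Fin d → 𝕜) :=
  {μ | Antitone μ ∧ (∀ i, 0 ≤ μ i) ∧ ∑ i, μ i = 1 ∧ ∀ k, prefixSum k lam ≤ prefixSum k μ}

variable {lam : Fin d → 𝕜} {A B : Fin d} {r : 𝕜}

theorem plateau_mem_accessiblePolytope (hlam : Antitone lam) (hnn : ∀ i, 0 ≤ lam i)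
    (hr0 : 0 ≤ r) (hrA : r ≤ lam A) (hAB : A < B) (hsum : ∑ i, lam i = 1)
    (hvsum : ∑ i, plateau lam A B r i = 1) :
    plateau lam A B r ∈ accessiblePolytope lam :=
  ⟨antitone_plateau hlam hr0 hrA, plateau_nonneg hnn hr0, hvsum,
    prefixSum_le_prefixSum_plateau hlam hnn hAB (hvsum.trans hsum.symm)⟩

theorem eq_plateau_of_mem_openSegment (hAB : A < B) (hvsum : ∑ i, plateau lam A B r i = 1)
    {μ ν : Fin d → 𝕜} (hμ : μ ∈ accessiblePolytope lam) (hν : ν ∈ accessiblePolytope lam)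
    (hseg : plateau lam A B r ∈ openSegment 𝕜 μ ν) : μ = plateau lam A B r := by
  obtain ⟨hμanti, hμnn, hμsum, hμmaj⟩ := hμ
  obtain ⟨hνanti, hνnn, -, hνmaj⟩ := hν
  let coord : Fin d → (Fin d → 𝕜) →ₗ[𝕜] 𝕜 := LinearMap.proj
  refine eq_plateau hAB (fun k hk => ?_) (fun j hAj hjB => ?_) (fun j hBj => ?_)
    (hμsum.trans hvsum.symm)
  · exact (prefixSum k).eq_of_mem_openSegment_of_le (hμmaj k) (hνmaj k) hseg
      (prefixSum_plateau_of_le hk)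
  · have hgap := (coord A - coord j).eq_of_mem_openSegment_of_le (c := 0)
      (by simpa [coord] using hμanti hAj.le) (by simpa [coord] using hνanti hAj.le) hseg
      (by simp [coord, plateau_of_le le_rfl, plateau_of_lt_of_lt hAj hjB])
    simpa [coord, sub_eq_zero, eq_comm] using hgap
  · exact (coord j).eq_of_mem_openSegment_of_le (hμnn j) (hνnn j) hseg (plateau_of_gt hAB hBj)

theorem plateau_mem_extremePoints (hlam : Antitone lam) (hnn : ∀ i, 0 ≤ lam i)
    (hr0 : 0 ≤ r) (hrA : r ≤ lam A) (hAB : A < B) (hsum : ∑ i, lam i = 1)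
    (hvsum : ∑ i, plateau lam A B r i = 1) :
    plateau lam A B r ∈ (accessiblePolytope lam).extremePoints 𝕜 :=
  ⟨plateau_mem_accessiblePolytope hlam hnn hr0 hrA hAB hsum hvsum,
    fun _ hμ _ hν hseg => eq_plateau_of_mem_openSegment hAB hvsum hμ hν hseg⟩

end AccessiblePolytope

/-- For a sorted probability vector `λ` with strictly decreasing entries, each vector
`v` coinciding with `λ` on the first entries (indices `≤ a`), then repeating `λ_a`,
followed by a remainder `λ_norm ∈ [0, λ_a]` making the total sum `1`, and then zeros,
majorizes `λ` and is a vertex (extreme point) of the accessible polytope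
`{μ : μ sorted, λ ≺ μ}`. -/
theorem stmt15 (d : ℕ) (lam : Fin d → ℝ) (hstrict : StrictAnti lam)
    (hnn : ∀ i, 0 ≤ lam i) (hsum : ∑ i, lam i = 1)
    (a b : ℕ) (hab : a < b) (hbd : b < d) (lnorm : ℝ)
    (hln0 : 0 ≤ lnorm) (hln : lnorm ≤ lam ⟨a, by omega⟩)
    (v : Fin d → ℝ)
    (hv : ∀ j : Fin d, v j =
      if (j : ℕ) ≤ a then lam j
      else if (j : ℕ) < b then lam ⟨a, by omega⟩
      else if (j : ℕ) = b then lnorm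
      else 0)
    (hvsum : ∑ j, v j = 1) :
    ((∀ k : ℕ, (∑ i : Fin d, if (i : ℕ) < k then lam i else 0)
        ≤ ∑ i : Fin d, if (i : ℕ) < k then v i else 0) ∧
      (∑ i, lam i) = ∑ i, v i) ∧
    v ∈ Set.extremePoints ℝ {μ : Fin d → ℝ |
        (∀ i j, i ≤ j → μ j ≤ μ i) ∧ (∀ i, 0 ≤ μ i) ∧ (∑ i, μ i = 1) ∧
        ∀ k : ℕ, (∑ i : Fin d, if (i : ℕ) < k then lam i else 0)
          ≤ ∑ i : Fin d, if (i : ℕ) < k then μ i else 0} := by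
  have hAB : (⟨a, by omega⟩ : Fin d) < ⟨b, hbd⟩ := Fin.mk_lt_mk.2 hab
  obtain rfl : v = plateau lam ⟨a, by omega⟩ ⟨b, hbd⟩ lnorm := by
    funext j
    simp only [hv, plateau, Fin.le_def, Fin.lt_def, Fin.ext_iff]
  exact ⟨⟨prefixSum_le_prefixSum_plateau hstrict.antitone hnn hAB (hvsum.trans hsum.symm),
      hsum.trans hvsum.symm⟩,
    plateau_mem_extremePoints hstrict.antitone hnn hln0 hln hAB hsum hvsum⟩
end

section
/- The triple integral ∫₀¹∫₀^{r₂}∫_{−1+r₁+r₂}^{1+r₁−r₂} dr₃ dr₁ dr₂ + ∫₀¹∫_{r₂}¹∫_{−1+r₁+r₂}^{1−r₁+r₂} dr₃ dr₁ dr₂ equals 2/3; consequently, the volume of the region {(r₁,r₂,r₃) : 0 ≤ r₁ ≤ 1, 0 ≤ r₂ ≤ 1, 1+r₁−r₂−r₃ ≥ 0, 1−r₁+r₂−r₃ ≥ 0, 1−r₁−r₂+r₃ ≥ 0, −1 ≤ r₃ ≤ 1} is 2/3. -/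
/-!
Over a point `(r₁, r₂)` of the unit square the region is the segment
`-1 + r₁ + r₂ ≤ r₃ ≤ 1 - |r₁ - r₂|` (the bounds `-1 ≤ r₃ ≤ 1` are then automatic), of length
`2 - 2 max(r₁, r₂)`. Integrating in `r₂` first gives `∫₀¹ (1 - r₁²) dr₁ = 2/3`; the
two iterated integrals are the same computation split along the diagonal `r₁ = r₂`.
-/

open MeasureTheory Set

theorem volume_regionBetween_Icc_eq_lintegral {α : Type*} [MeasurableSpace α] {μ : Measure α}
    {f g : α → ℝ} {s : Set α} (hf : Measurable f) (hg : Measurable g) (hs : MeasurableSet s) :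
    μ.prod volume {p : α × ℝ | p.1 ∈ s ∧ p.2 ∈ Icc (f p.1) (g p.1)} =
      ∫⁻ x in s, ENNReal.ofReal (g x - f x) ∂μ := by
  rw [Measure.prod_apply (measurableSet_region_between_cc hf hg hs), ← lintegral_indicator hs]
  refine lintegral_congr fun x => ?_
  by_cases hx : x ∈ s
  · simp only [preimage_ofPred_eq, hx, true_and, indicator_of_mem, ofPred_mem_eq, Real.volume_Icc]
  · simp [hx]

theorem measurePreserving_init_last {α : Type*} [MeasureSpace α] [SigmaFinite (volume : Measure α)]
    (n : ℕ) :
    MeasurePreserving (fun r : Fin (n + 1) → α => (Fin.init r, r (Fin.last n)))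
      volume (volume.prod volume) := by
  have h : (fun r : Fin (n + 1) → α => (Fin.init r, r (Fin.last n))) =
      Prod.swap ∘ MeasurableEquiv.piFinSuccAbove (fun _ => α) (Fin.last n) := by
    funext r
    simp [MeasurableEquiv.piFinSuccAbove]
  rw [h]
  exact Measure.measurePreserving_swap.comp
    (volume_preserving_piFinSuccAbove (fun _ => α) (Fin.last n))

theorem integral_quadratic (a b c₀ c₁ c₂ : ℝ) :
    ∫ x in a..b, (c₀ + c₁ * x + c₂ * x ^ 2) =
      c₀ * (b - a) + c₁ * (b ^ 2 - a ^ 2) / 2 + c₂ * (b ^ 3 - a ^ 3) / 3 := by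
  rw [intervalIntegral.integral_add (Continuous.intervalIntegrable (by fun_prop) _ _)
      (Continuous.intervalIntegrable (by fun_prop) _ _),
    intervalIntegral.integral_add intervalIntegrable_const
      (Continuous.intervalIntegrable (by fun_prop) _ _),
    intervalIntegral.integral_const_mul, intervalIntegral.integral_const_mul,
    intervalIntegral.integral_const, integral_id, integral_pow, smul_eq_mul]
  ring

theorem integral_two_sub_two_mul_max {x : ℝ} (hx₀ : 0 ≤ x) (hx₁ : x ≤ 1) :
    ∫ y in (0 : ℝ)..1, (2 - 2 * max x y) = 1 - x ^ 2 := by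
  have hcont : Continuous fun y : ℝ => 2 - 2 * max x y := by fun_prop
  rw [← intervalIntegral.integral_add_adjacent_intervals (b := x)
      (hcont.intervalIntegrable _ _) (hcont.intervalIntegrable _ _),
    intervalIntegral.integral_congr (g := fun _ => 2 - 2 * x) fun y hy => by
      rw [uIcc_of_le hx₀] at hy; rw [max_eq_left hy.2],
    intervalIntegral.integral_congr (a := x) (b := 1) (g := fun y => 2 + (-2) * y + 0 * y ^ 2)
      fun y hy => by
      rw [uIcc_of_le hx₁] at hy; rw [max_eq_right hy.1]; ring,
    intervalIntegral.integral_const, integral_quadratic, smul_eq_mul]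
  ring

theorem integral_unitSquare_two_sub_two_mul_max :
    ∫ p in Icc (0 : ℝ) 1 ×ˢ Icc (0 : ℝ) 1, (2 - 2 * max p.1 p.2) = 2 / 3 := by
  have hint : IntegrableOn (fun p : ℝ × ℝ => 2 - 2 * max p.1 p.2) (Icc 0 1 ×ˢ Icc 0 1) :=
    (Continuous.continuousOn (by fun_prop)).integrableOn_compact (isCompact_Icc.prod isCompact_Icc)
  rw [Measure.volume_eq_prod, setIntegral_prod _ hint,
    setIntegral_congr_fun measurableSet_Icc (g := fun x => 1 + 0 * x + (-1) * x ^ 2) fun x hx => by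
      rw [integral_Icc_eq_integral_Ioc, ← intervalIntegral.integral_of_le zero_le_one,
        integral_two_sub_two_mul_max hx.1 hx.2]; ring,
    integral_Icc_eq_integral_Ioc, ← intervalIntegral.integral_of_le zero_le_one,
    integral_quadratic]
  norm_num

theorem iteratedIntegral_eq_two_thirds :
    (∫ r2 in (0 : ℝ)..1, ∫ r1 in (0 : ℝ)..r2,
        ∫ _r3 in (-1 + r1 + r2)..(1 + r1 - r2), (1 : ℝ)) +
      (∫ r2 in (0 : ℝ)..1, ∫ r1 in r2..(1 : ℝ),
        ∫ _r3 in (-1 + r1 + r2)..(1 - r1 + r2), (1 : ℝ)) = 2 / 3 := by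
  have below : ∀ r2 : ℝ, ∫ r1 in (0 : ℝ)..r2, ∫ _r3 in (-1 + r1 + r2)..(1 + r1 - r2), (1 : ℝ) =
      0 + 2 * r2 + (-2) * r2 ^ 2 := by
    intro r2
    simp only [intervalIntegral.integral_const, smul_eq_mul, mul_one]
    rw [intervalIntegral.integral_congr (g := fun r1 => (2 - 2 * r2) + 0 * r1 + 0 * r1 ^ 2)
      fun r1 _ => by ring, integral_quadratic]
    ring
  have above : ∀ r2 : ℝ, ∫ r1 in r2..(1 : ℝ), ∫ _r3 in (-1 + r1 + r2)..(1 - r1 + r2), (1 : ℝ) =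
      1 + (-2) * r2 + 1 * r2 ^ 2 := by
    intro r2
    simp only [intervalIntegral.integral_const, smul_eq_mul, mul_one]
    rw [intervalIntegral.integral_congr (g := fun r1 => 2 + (-2) * r1 + 0 * r1 ^ 2)
      fun r1 _ => by ring, integral_quadratic]
    ring
  simp only [below, above, integral_quadratic]
  norm_num

theorem min_sub_eq_two_sub_two_mul_max (x y : ℝ) :
    min (1 + x - y) (1 - x + y) - (-1 + x + y) = 2 - 2 * max x y := by
  rcases le_total x y with h | h
  · rw [max_eq_right h, min_eq_left (by linarith)]
    ring
  · rw [max_eq_left h, min_eq_right (by linarith)]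
    ring

theorem volume_regionBetween_unitSquare :
    volume {p : (ℝ × ℝ) × ℝ | p.1 ∈ Icc (0 : ℝ) 1 ×ˢ Icc (0 : ℝ) 1 ∧
      p.2 ∈ Icc (-1 + p.1.1 + p.1.2) (min (1 + p.1.1 - p.1.2) (1 - p.1.1 + p.1.2))} =
      ENNReal.ofReal (2 / 3) := by
  have hsquare : MeasurableSet (Icc (0 : ℝ) 1 ×ˢ Icc (0 : ℝ) 1) :=
    measurableSet_Icc.prod measurableSet_Icc
  have hnonneg : 0 ≤ᵐ[volume.restrict (Icc (0 : ℝ) 1 ×ˢ Icc (0 : ℝ) 1)]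
      fun p : ℝ × ℝ => 2 - 2 * max p.1 p.2 := by
    refine (ae_restrict_iff' hsquare).2 (Filter.Eventually.of_forall fun p hp => ?_)
    have := max_le hp.1.2 hp.2.2
    simp only [Pi.zero_apply]
    linarith
  rw [Measure.volume_eq_prod, volume_regionBetween_Icc_eq_lintegral
    (f := fun p => -1 + p.1 + p.2) (g := fun p => min (1 + p.1 - p.2) (1 - p.1 + p.2))
    (by fun_prop) (by fun_prop) hsquare]
  simp only [min_sub_eq_two_sub_two_mul_max]
  rw [← ofReal_integral_eq_lintegral_ofReal
      ((Continuous.continuousOn (by fun_prop)).integrableOn_compact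
        (isCompact_Icc.prod isCompact_Icc)) hnonneg,
    integral_unitSquare_two_sub_two_mul_max]

theorem volume_region_eq_two_thirds :
    volume {r : Fin 3 → ℝ |
        0 ≤ r 0 ∧ r 0 ≤ 1 ∧ 0 ≤ r 1 ∧ r 1 ≤ 1 ∧
        0 ≤ 1 + r 0 - r 1 - r 2 ∧ 0 ≤ 1 - r 0 + r 1 - r 2 ∧ 0 ≤ 1 - r 0 - r 1 + r 2 ∧
        -1 ≤ r 2 ∧ r 2 ≤ 1} = ENNReal.ofReal (2 / 3) := by
  have hcoord : MeasurePreserving (fun r : Fin 3 → ℝ => ((r 0, r 1), r 2)) volume volume := by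
    rw [Measure.volume_eq_prod, Measure.volume_eq_prod]
    exact ((volume_preserving_finTwoArrow ℝ).prod (MeasurePreserving.id volume)).comp
      (measurePreserving_init_last 2)
  have hregion : {r : Fin 3 → ℝ |
        0 ≤ r 0 ∧ r 0 ≤ 1 ∧ 0 ≤ r 1 ∧ r 1 ≤ 1 ∧
        0 ≤ 1 + r 0 - r 1 - r 2 ∧ 0 ≤ 1 - r 0 + r 1 - r 2 ∧ 0 ≤ 1 - r 0 - r 1 + r 2 ∧
        -1 ≤ r 2 ∧ r 2 ≤ 1} = (fun r : Fin 3 → ℝ => ((r 0, r 1), r 2)) ⁻¹'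
      {p | p.1 ∈ Icc (0 : ℝ) 1 ×ˢ Icc (0 : ℝ) 1 ∧
        p.2 ∈ Icc (-1 + p.1.1 + p.1.2) (min (1 + p.1.1 - p.1.2) (1 - p.1.1 + p.1.2))} := by
    ext r
    simp only [mem_ofPred_eq, mem_preimage, mem_prod, mem_Icc, le_min_iff]
    constructor
    · rintro ⟨h₁, h₂, h₃, h₄, h₅, h₆, h₇, -, -⟩
      exact ⟨⟨⟨h₁, h₂⟩, h₃, h₄⟩, by linarith, by linarith, by linarith⟩
    · rintro ⟨⟨⟨h₁, h₂⟩, h₃, h₄⟩, h₅, h₆, h₇⟩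
      exact ⟨h₁, h₂, h₃, h₄, by linarith, by linarith, by linarith, by linarith, by linarith⟩
  rw [hregion, hcoord.measure_preimage (measurableSet_region_between_cc
    (f := fun p : ℝ × ℝ => -1 + p.1 + p.2) (g := fun p => min (1 + p.1 - p.2) (1 - p.1 + p.2))
    (by fun_prop) (by fun_prop) (measurableSet_Icc.prod measurableSet_Icc)).nullMeasurableSet,
    volume_regionBetween_unitSquare]

/-- The triple integral
`∫₀¹∫₀^{r₂}∫_{−1+r₁+r₂}^{1+r₁−r₂} dr₃ dr₁ dr₂ + ∫₀¹∫_{r₂}¹∫_{−1+r₁+r₂}^{1−r₁+r₂} dr₃ dr₁ dr₂`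
equals `2/3`; consequently, the volume of the region
`{(r₁,r₂,r₃) : 0 ≤ r₁,r₂ ≤ 1, 1+r₁−r₂−r₃ ≥ 0, 1−r₁+r₂−r₃ ≥ 0, 1−r₁−r₂+r₃ ≥ 0, −1 ≤ r₃ ≤ 1}`
is `2/3`. -/
theorem stmt19 :
    ((∫ r2 in (0 : ℝ)..1, ∫ r1 in (0 : ℝ)..r2,
        ∫ _r3 in (-1 + r1 + r2)..(1 + r1 - r2), (1 : ℝ)) +
      (∫ r2 in (0 : ℝ)..1, ∫ r1 in r2..(1 : ℝ),
        ∫ _r3 in (-1 + r1 + r2)..(1 - r1 + r2), (1 : ℝ)) = 2 / 3) ∧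
    volume {r : Fin 3 → ℝ |
        0 ≤ r 0 ∧ r 0 ≤ 1 ∧ 0 ≤ r 1 ∧ r 1 ≤ 1 ∧
        0 ≤ 1 + r 0 - r 1 - r 2 ∧ 0 ≤ 1 - r 0 + r 1 - r 2 ∧ 0 ≤ 1 - r 0 - r 1 + r 2 ∧
        -1 ≤ r 2 ∧ r 2 ≤ 1} = ENNReal.ofReal (2 / 3) :=
  ⟨iteratedIntegral_eq_two_thirds, volume_region_eq_two_thirds⟩
end
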